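/- arXiv:2211.09056 — 2 statements merged into one kernel-verified Lean document; each statement's English description precedes it below -/
import Mathlib

section
/- Let 𝔽 be a field, let λM₁ + M₀ be a pencil of size (η+1)p × (ε+1)m, let Y ∈ 𝔽^{εm×εm} and Z ∈ 𝔽^{ηp×ηp} be invertible constant matrices, and let C_EK(λ) = [[λM₁+M₀, (Z(L_η(λ) ⊗ I_p))ᵀ],[Y(L_ε(λ) ⊗ I_m), 0]] be the associated extended block Kronecker pencil. Partition λM₁+M₀ = [[M₁₁(λ), M₁₂(λ)],[M₂₁(λ), M₂₂(λ)]] with M₁₁(λ) of size ηp × εm, write L_ε(λ) ⊗ I_m = [A_{ε,m}(λ) B_{ε,m}(λ)] with A_{ε,m}(λ) of size εm × εm, and L_η(λ) ⊗ I_p = [A_{η,p}(λ) B_{η,p}(λ)] with A_{η,p}(λ) of size ηp × ηp. Set Ã(λ) = [[M₁₁(λ), A_{η,p}(λ)ᵀZᵀ],[YA_{ε,m}(λ), 0]], B̃(λ) = [M₁₂(λ); YB_{ε,m}(λ)], C̃(λ) = −[M₂₁(λ) B_{η,p}(λ)ᵀZᵀ], D̃(λ) = M₂₂(λ). Then: (a)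 Ã(λ) is unimodular; (b) the Schur complement D̃(λ) + C̃(λ)Ã(λ)⁻¹B̃(λ) equals P(λ) := (Λ_η(λ)ᵀ ⊗ I_p)(λM₁+M₀)(Λ_ε(λ) ⊗ I_m); (c) C_EK(λ) is a linearization of P(λ). -/
open Polynomial Matrix

/-- The pencil `L_k(λ) ∈ F[λ]^{k × (k+1)}` with `-1` in positions `(i,i)` and `λ` in
positions `(i,i+1)`. -/
noncomputable def Lpencil (F : Type*) [Field F] (k : ℕ) :
    Matrix (Fin k) (Fin (k+1)) (Polynomial F) :=
  Matrix.of fun i j =>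
    if (j : ℕ) = (i : ℕ) then -1 else if (j : ℕ) = (i : ℕ) + 1 then Polynomial.X else 0

/-- The row matrix `Λ_k(λ)ᵀ ⊗ I_p` where `Λ_k(λ) = [λ^k, …, λ, 1]ᵀ`. -/
noncomputable def lamRow (F : Type*) [Field F] (k p : ℕ) :
    Matrix (Fin p) (Fin (k+1) × Fin p) (Polynomial F) :=
  Matrix.of fun i rc =>
    if rc.2 = i then (Polynomial.X : Polynomial F) ^ (k - (rc.1 : ℕ)) else 0

/-- The column matrix `Λ_k(λ) ⊗ I_m`. -/
noncomputable def lamCol (F : Type*) [Field F] (k m : ℕ) :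
    Matrix (Fin (k+1) × Fin m) (Fin m) (Polynomial F) :=
  Matrix.of fun rc j =>
    if rc.2 = j then (Polynomial.X : Polynomial F) ^ (k - (rc.1 : ℕ)) else 0

section Aux
variable (F : Type*) [Field F]

noncomputable def Apart (k n : ℕ) : Matrix (Fin k × Fin n) (Fin k × Fin n) (Polynomial F) :=
  ((Lpencil F k).kronecker (1 : Matrix (Fin n) (Fin n) (Polynomial F))).submatrix
    id (fun cj => (cj.1.castSucc, cj.2))

noncomputable def Bpart (k n : ℕ) : Matrix (Fin k × Fin n) (Fin n) (Polynomial F) :=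
  ((Lpencil F k).kronecker (1 : Matrix (Fin n) (Fin n) (Polynomial F))).submatrix
    id (fun j => (Fin.last k, j))

noncomputable def Lam' (k n : ℕ) : Matrix (Fin k × Fin n) (Fin n) (Polynomial F) :=
  (lamCol F k n).submatrix (fun rc => (rc.1.castSucc, rc.2)) id

lemma Apart_mul_Lam' (k n : ℕ) : Apart F k n * Lam' F k n = -(Bpart F k n) := by
  ext ⟨i, c⟩ y
  rw [Matrix.mul_apply, Fintype.sum_prod_type]
  have h1 : ∀ j : Fin k, (∑ d : Fin n, Apart F k n (i,c) (j,d) * Lam' F k n (j,d) y)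
      = Lpencil F k i j.castSucc * (if c = y then (X:Polynomial F)^(k - (j:ℕ)) else 0) := by
    intro j
    rw [Finset.sum_eq_single c]
    · simp [Apart, Lam', lamCol, Matrix.one_apply]
    · intro d _ hd
      simp [Apart, Lam', lamCol, Matrix.one_apply, Ne.symm hd]
    · simp
  simp_rw [h1]
  by_cases hcy : c = y
  · simp only [hcy, if_true]
    have h2 : ∀ j : Fin k, Lpencil F k i j.castSucc * (X:Polynomial F)^(k - (j:ℕ))
        = (if j = i then -((X:Polynomial F)^(k - (i:ℕ))) else 0)
          + (if (j:ℕ) = (i:ℕ) + 1 then (X:Polynomial F) * (X:Polynomial F)^(k - (j:ℕ)) else 0) := by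
      intro j
      simp only [Lpencil, Matrix.of_apply, Fin.coe_castSucc]
      by_cases hji : (j:ℕ) = (i:ℕ)
      · have : j = i := Fin.ext hji
        simp [this, hji]
      · have : j ≠ i := fun h => hji (by rw [h])
        by_cases hji1 : (j:ℕ) = (i:ℕ) + 1 <;> simp [hji, hji1, this]
    simp_rw [h2, Finset.sum_add_distrib]
    rw [Finset.sum_ite_eq' Finset.univ i (fun _ => -((X:Polynomial F)^(k - (i:ℕ))))]
    simp only [Finset.mem_univ, if_true]
    by_cases hik : (i:ℕ) + 1 < k
    · rw [Finset.sum_eq_single (⟨(i:ℕ)+1, hik⟩ : Fin k)]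
      · have hx : (X:Polynomial F) * (X:Polynomial F)^(k - ((i:ℕ)+1)) = (X:Polynomial F)^(k - (i:ℕ)) := by
          rw [← pow_succ']
          congr 1
          omega
        have hlast : k ≠ (i:ℕ) + 1 := by omega
        have hlast0 : k ≠ (i:ℕ) := by have := i.isLt; omega
        simp [Bpart, Lpencil, hx, hlast, hlast0, Matrix.one_apply]
      · intro b _ hb
        have : (b:ℕ) ≠ (i:ℕ) + 1 := fun h => hb (Fin.ext h)
        simp [this]
      · simp
    · have hik' : (i:ℕ) + 1 = k := by have := i.isLt; omega
      rw [Finset.sum_eq_zero]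
      · have hlast : k = (i:ℕ) + 1 := by omega
        have hlast0 : k ≠ (i:ℕ) := by omega
        have hk : k - (i:ℕ) = 1 := by omega
        simp [Bpart, Lpencil, hlast, hlast0, hk, Matrix.one_apply]
      · intro b _
        have : (b:ℕ) ≠ (i:ℕ) + 1 := by have := b.isLt; omega
        simp [this]
  · simp only [hcy, if_false, mul_zero, Finset.sum_const_zero]
    simp [Bpart, Lpencil, Matrix.one_apply, hcy]

lemma isUnit_det_Apart (k n : ℕ) : IsUnit (Apart F k n).det := by
  have key : ∀ x y : Fin k × Fin n, finProdFinEquiv y < finProdFinEquiv x → Apart F k n x y = 0 := by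
    rintro ⟨i, c⟩ ⟨j, d⟩ hlt
    rw [Fin.lt_def] at hlt
    simp only [finProdFinEquiv_apply_val] at hlt
    show Lpencil F k i j.castSucc * (1 : Matrix (Fin n) (Fin n) (Polynomial F)) c d = 0
    by_cases hcd : c = d
    · have hji : (j:ℕ) ≠ (i:ℕ) := by
        intro h; rw [hcd, h] at hlt; omega
      have hji1 : (j:ℕ) ≠ (i:ℕ) + 1 := by
        have hc := c.isLt; have hd := d.isLt
        intro h; rw [h, Nat.mul_succ] at hlt; omega
      simp [Lpencil, hji, hji1]
    · simp [Matrix.one_apply, hcd]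
  have htri : ((Apart F k n).submatrix (finProdFinEquiv.symm) (finProdFinEquiv.symm)).BlockTriangular id := by
    intro a b hlt
    exact key (finProdFinEquiv.symm a) (finProdFinEquiv.symm b)
      (by rw [Equiv.apply_symm_apply, Equiv.apply_symm_apply]; exact hlt)
  have hdet : (Apart F k n).det
      = ∏ q : Fin (k*n), ((Apart F k n).submatrix (finProdFinEquiv.symm) (finProdFinEquiv.symm)) q q := by
    rw [← Matrix.det_of_upperTriangular htri, Matrix.det_submatrix_equiv_self]
  have hdiag : ∀ q : Fin (k*n),
      ((Apart F k n).submatrix (finProdFinEquiv.symm) (finProdFinEquiv.symm)) q q = -1 := by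
    intro q
    show Apart F k n (finProdFinEquiv.symm q) (finProdFinEquiv.symm q) = -1
    obtain ⟨i, c⟩ := (finProdFinEquiv.symm q : Fin k × Fin n)
    show Lpencil F k i i.castSucc * (1 : Matrix (Fin n) (Fin n) (Polynomial F)) c c = -1
    simp [Lpencil, Matrix.one_apply]
  rw [hdet]
  simp_rw [hdiag]
  rw [Finset.prod_const]
  exact (isUnit_one.neg).pow _
end Aux

def splitEquiv (k n : ℕ) : (Fin k × Fin n) ⊕ Fin n ≃ Fin (k+1) × Fin n where
  toFun := Sum.elim (fun x => (x.1.castSucc, x.2)) (fun a => (Fin.last k, a))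
  invFun := fun x => Fin.lastCases (Sum.inr x.2) (fun i => Sum.inl (i, x.2)) x.1
  left_inv := by rintro (⟨i, a⟩ | a) <;> simp
  right_inv := by
    rintro ⟨i, a⟩
    induction i using Fin.lastCases <;> simp

def eRow (p ε m η : ℕ) :
    Fin p ⊕ ((Fin ε × Fin m) ⊕ (Fin η × Fin p)) ≃ (Fin (η+1) × Fin p) ⊕ (Fin ε × Fin m) where
  toFun := Sum.elim (fun i : Fin p => Sum.inl (Fin.last η, i))
    (Sum.elim (fun em : Fin ε × Fin m => Sum.inr em)
      (fun hp : Fin η × Fin p => Sum.inl (hp.1.castSucc, hp.2)))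
  invFun := Sum.elim
    (fun x => Fin.lastCases (Sum.inl x.2) (fun i => Sum.inr (Sum.inr (i, x.2))) x.1)
    (fun em => Sum.inr (Sum.inl em))
  left_inv := by rintro (i | (em | ⟨i, a⟩)) <;> simp
  right_inv := by
    rintro (⟨i, a⟩ | em)
    · induction i using Fin.lastCases <;> simp
    · simp

def eCol (m ε η p : ℕ) :
    Fin m ⊕ ((Fin ε × Fin m) ⊕ (Fin η × Fin p)) ≃ (Fin (ε+1) × Fin m) ⊕ (Fin η × Fin p) where
  toFun := Sum.elim (fun j : Fin m => Sum.inl (Fin.last ε, j))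
    (Sum.elim (fun em : Fin ε × Fin m => Sum.inl (em.1.castSucc, em.2))
      (fun hp : Fin η × Fin p => Sum.inr hp))
  invFun := Sum.elim
    (fun x => Fin.lastCases (Sum.inl x.2) (fun i => Sum.inr (Sum.inl (i, x.2))) x.1)
    (fun hp => Sum.inr (Sum.inr hp))
  left_inv := by rintro (j | (em | hp)) <;> simp
  right_inv := by
    rintro (⟨i, a⟩ | hp)
    · induction i using Fin.lastCases <;> simp
    · simp

/-- An extended block Kronecker pencil
`C_EK(λ) = [[λM₁ + M₀, (Z (L_η(λ) ⊗ I_p))ᵀ], [Y (L_ε(λ) ⊗ I_m), 0]]` with `Y`, `Z`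
invertible, viewed as a polynomial system matrix with state matrix
`Ã(λ) = [[M₁₁(λ), A_{η,p}(λ)ᵀ Zᵀ], [Y A_{ε,m}(λ), 0]]`, has `Ã(λ)` unimodular and Schur
complement `D̃ + C̃ Ã⁻¹ B̃ = P(λ) = (Λ_η(λ)ᵀ ⊗ I_p)(λM₁ + M₀)(Λ_ε(λ) ⊗ I_m)`; consequently
`C_EK(λ)` is a linearization of `P(λ)`. -/
theorem stmt_16 {F : Type*} [Field F] {p m η ε : ℕ}
    (M : Matrix (Fin (η+1) × Fin p) (Fin (ε+1) × Fin m) (Polynomial F))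
    (hM : ∀ i j, (M i j).degree ≤ 1)
    -- invertible constant matrices `Y` and `Z`
    (Y : Matrix (Fin ε × Fin m) (Fin ε × Fin m) F) (hY : IsUnit Y.det)
    (Z : Matrix (Fin η × Fin p) (Fin η × Fin p) F) (hZ : IsUnit Z.det)
    -- the extended block Kronecker pencil
    (CEK : Matrix ((Fin (η+1) × Fin p) ⊕ (Fin ε × Fin m))
      ((Fin (ε+1) × Fin m) ⊕ (Fin η × Fin p)) (Polynomial F))
    (hCEK : CEK = Matrix.fromBlocks M
      ((Z.map Polynomial.C *
        (Lpencil F η).kronecker (1 : Matrix (Fin p) (Fin p) (Polynomial F)))ᵀ)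
      (Y.map Polynomial.C *
        (Lpencil F ε).kronecker (1 : Matrix (Fin m) (Fin m) (Polynomial F))) 0)
    (P : Matrix (Fin p) (Fin m) (Polynomial F))
    (hP : P = lamRow F η p * M * lamCol F ε m)
    -- the blocks of `M`
    (M11 : Matrix (Fin η × Fin p) (Fin ε × Fin m) (Polynomial F))
    (hM11 : M11 = M.submatrix (fun ri => (ri.1.castSucc, ri.2)) (fun cj => (cj.1.castSucc, cj.2)))
    (M12 : Matrix (Fin η × Fin p) (Fin m) (Polynomial F))
    (hM12 : M12 = M.submatrix (fun ri => (ri.1.castSucc, ri.2)) (fun j => (Fin.last ε, j)))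
    (M21 : Matrix (Fin p) (Fin ε × Fin m) (Polynomial F))
    (hM21 : M21 = M.submatrix (fun i => (Fin.last η, i)) (fun cj => (cj.1.castSucc, cj.2)))
    (M22 : Matrix (Fin p) (Fin m) (Polynomial F))
    (hM22 : M22 = M.submatrix (fun i => (Fin.last η, i)) (fun j => (Fin.last ε, j)))
    -- `L_ε(λ) ⊗ I_m = [A_{ε,m}(λ)  B_{ε,m}(λ)]`
    (Aem : Matrix (Fin ε × Fin m) (Fin ε × Fin m) (Polynomial F))
    (hAem : Aem = ((Lpencil F ε).kronecker (1 : Matrix (Fin m) (Fin m) (Polynomial F))).submatrix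
      id (fun cj => (cj.1.castSucc, cj.2)))
    (Bem : Matrix (Fin ε × Fin m) (Fin m) (Polynomial F))
    (hBem : Bem = ((Lpencil F ε).kronecker (1 : Matrix (Fin m) (Fin m) (Polynomial F))).submatrix
      id (fun j => (Fin.last ε, j)))
    -- `L_η(λ) ⊗ I_p = [A_{η,p}(λ)  B_{η,p}(λ)]`
    (Ahp : Matrix (Fin η × Fin p) (Fin η × Fin p) (Polynomial F))
    (hAhp : Ahp = ((Lpencil F η).kronecker (1 : Matrix (Fin p) (Fin p) (Polynomial F))).submatrix
      id (fun cj => (cj.1.castSucc, cj.2)))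
    (Bhp : Matrix (Fin η × Fin p) (Fin p) (Polynomial F))
    (hBhp : Bhp = ((Lpencil F η).kronecker (1 : Matrix (Fin p) (Fin p) (Polynomial F))).submatrix
      id (fun i => (Fin.last η, i)))
    -- `Ã(λ) = [[M₁₁, A_{η,p}ᵀ Zᵀ], [Y A_{ε,m}, 0]]` (rows relabelled so that it is square),
    -- `B̃(λ) = [M₁₂; Y B_{ε,m}]`, `C̃(λ) = -[M₂₁  B_{η,p}ᵀ Zᵀ]`, `D̃ = M₂₂`
    (At : Matrix ((Fin ε × Fin m) ⊕ (Fin η × Fin p)) ((Fin ε × Fin m) ⊕ (Fin η × Fin p))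
      (Polynomial F))
    (hAt : At = (Matrix.fromBlocks M11 (Ahpᵀ * (Z.map Polynomial.C)ᵀ)
      (Y.map Polynomial.C * Aem) 0).submatrix
      (Equiv.sumComm (Fin ε × Fin m) (Fin η × Fin p)) id)
    (Bt : Matrix ((Fin ε × Fin m) ⊕ (Fin η × Fin p)) (Fin m) (Polynomial F))
    (hBt : Bt = (Matrix.fromRows M12 (Y.map Polynomial.C * Bem)).submatrix
      (Equiv.sumComm (Fin ε × Fin m) (Fin η × Fin p)) id)
    (Ct : Matrix (Fin p) ((Fin ε × Fin m) ⊕ (Fin η × Fin p)) (Polynomial F))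
    (hCt : Ct = -(Matrix.fromCols M21 (Bhpᵀ * (Z.map Polynomial.C)ᵀ))) :
    -- (a) `Ã(λ)` is unimodular
    IsUnit At.det ∧
    -- (b) the Schur complement of `Ã(λ)` in `C_EK(λ)` is `P(λ)`
    M22 + Ct * At⁻¹ * Bt = P ∧
    -- (c) `C_EK(λ)` is a linearization of `P(λ)`
    (∃ (U₁ : Matrix (Fin p ⊕ ((Fin ε × Fin m) ⊕ (Fin η × Fin p)))
        ((Fin (η+1) × Fin p) ⊕ (Fin ε × Fin m)) (Polynomial F))
       (V₁ : Matrix ((Fin (ε+1) × Fin m) ⊕ (Fin η × Fin p))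
        (Fin m ⊕ ((Fin ε × Fin m) ⊕ (Fin η × Fin p))) (Polynomial F)),
       IsUnit ((U₁.submatrix id
         (Sum.elim (fun i : Fin p => Sum.inl (Fin.last η, i))
           (Sum.elim (fun em : Fin ε × Fin m => Sum.inr em)
             (fun hp : Fin η × Fin p => Sum.inl (hp.1.castSucc, hp.2))))).det) ∧
       IsUnit ((V₁.submatrix
         (Sum.elim (fun j : Fin m => Sum.inl (Fin.last ε, j))
           (Sum.elim (fun em : Fin ε × Fin m => Sum.inl (em.1.castSucc, em.2))
             (fun hp : Fin η × Fin p => Sum.inr hp)))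
         id).det) ∧
       U₁ * CEK * V₁ = Matrix.fromBlocks P 0 0
         (1 : Matrix ((Fin ε × Fin m) ⊕ (Fin η × Fin p))
            ((Fin ε × Fin m) ⊕ (Fin η × Fin p)) (Polynomial F))) := by
  
  classical
  -- determinants of the constant matrices over F[X]
  have hYdet : IsUnit ((Y.map (Polynomial.C : F →+* Polynomial F)).det) := by
    have h := (Polynomial.C : F →+* Polynomial F).map_det Y
    rw [RingHom.mapMatrix_apply] at h
    rw [← h]; exact hY.map (Polynomial.C : F →+* Polynomial F)
  have hZdet : IsUnit ((Z.map (Polynomial.C : F →+* Polynomial F)).det) := by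
    have h := (Polynomial.C : F →+* Polynomial F).map_det Z
    rw [RingHom.mapMatrix_apply] at h
    rw [← h]; exact hZ.map (Polynomial.C : F →+* Polynomial F)
  have hAem' : Aem = Apart F ε m := hAem
  have hBem' : Bem = Bpart F ε m := hBem
  have hAhp' : Ahp = Apart F η p := hAhp
  have hBhp' : Bhp = Bpart F η p := hBhp
  have hAemdet : IsUnit Aem.det := by rw [hAem']; exact isUnit_det_Apart F ε m
  have hAhpdet : IsUnit Ahp.det := by rw [hAhp']; exact isUnit_det_Apart F η p
  have hmule : Aem * Lam' F ε m = -Bem := by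
    rw [hAem', hBem']; exact Apart_mul_Lam' F ε m
  have hmulh : Ahp * Lam' F η p = -Bhp := by
    rw [hAhp', hBhp']; exact Apart_mul_Lam' F η p
  -- block form of At
  have hAtB : At = Matrix.fromBlocks (Y.map Polynomial.C * Aem) 0 M11
      (Ahpᵀ * (Z.map Polynomial.C)ᵀ) := by
    rw [hAt]; ext (x | x) (y | y) <;> rfl
  have hdetAZ : IsUnit (Ahpᵀ * (Z.map Polynomial.C)ᵀ).det := by
    rw [Matrix.det_mul, Matrix.det_transpose, Matrix.det_transpose]
    exact hAhpdet.mul hZdet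
  have hdetAt : IsUnit At.det := by
    rw [hAtB, Matrix.det_fromBlocks_zero₁₂, Matrix.det_mul]
    exact (hYdet.mul hAemdet).mul hdetAZ
  -- Schur complement computation (part b)
  have hBtB : Bt = Matrix.fromRows (Y.map Polynomial.C * Bem) M12 := by
    rw [hBt]; ext (x | x) y <;> rfl
  have hsol : At * Matrix.fromRows (-(Lam' F ε m))
      ((Ahpᵀ * (Z.map Polynomial.C)ᵀ)⁻¹ * (M12 + M11 * Lam' F ε m)) = Bt := by
    rw [hAtB, hBtB, Matrix.fromBlocks_mul_fromRows]
    have e1 : Y.map Polynomial.C * Aem * -(Lam' F ε m)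
        + (0 : Matrix (Fin ε × Fin m) (Fin η × Fin p) (Polynomial F))
          * ((Ahpᵀ * (Z.map Polynomial.C)ᵀ)⁻¹ * (M12 + M11 * Lam' F ε m))
        = Y.map Polynomial.C * Bem := by
      rw [Matrix.zero_mul, add_zero, Matrix.mul_assoc, Matrix.mul_neg, hmule, neg_neg]
    have e2 : M11 * -(Lam' F ε m)
        + (Ahpᵀ * (Z.map Polynomial.C)ᵀ) * ((Ahpᵀ * (Z.map Polynomial.C)ᵀ)⁻¹ * (M12 + M11 * Lam' F ε m))
        = M12 := by
      rw [Matrix.mul_nonsing_inv_cancel_left _ _ hdetAZ, Matrix.mul_neg]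
      abel
    rw [e1, e2]
  have hinvBt : At⁻¹ * Bt = Matrix.fromRows (-(Lam' F ε m))
      ((Ahpᵀ * (Z.map Polynomial.C)ᵀ)⁻¹ * (M12 + M11 * Lam' F ε m)) := by
    rw [← hsol, Matrix.nonsing_inv_mul_cancel_left _ _ hdetAt]
  have hBhpT : Bhpᵀ * (Z.map Polynomial.C)ᵀ *
      ((Ahpᵀ * (Z.map Polynomial.C)ᵀ)⁻¹ * (M12 + M11 * Lam' F ε m))
      = -((Lam' F η p)ᵀ * (M12 + M11 * Lam' F ε m)) := by
    have h : (Lam' F η p)ᵀ * Ahpᵀ = -Bhpᵀ := by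
      have h0 := congrArg Matrix.transpose hmulh
      rw [Matrix.transpose_mul, Matrix.transpose_neg] at h0
      exact h0
    have h1 : Bhpᵀ = -((Lam' F η p)ᵀ * Ahpᵀ) := by rw [h, neg_neg]
    rw [h1, Matrix.neg_mul, Matrix.neg_mul, neg_inj,
      Matrix.mul_assoc (Lam' F η p)ᵀ Ahpᵀ ((Z.map Polynomial.C)ᵀ),
      Matrix.mul_assoc, Matrix.mul_nonsing_inv_cancel_left _ _ hdetAZ]
  have hPdec : P = (Lam' F η p)ᵀ * M11 * Lam' F ε m + (Lam' F η p)ᵀ * M12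
      + M21 * Lam' F ε m + M22 := by
    have hFB : Matrix.fromBlocks M11 M12 M21 M22
        = M.submatrix (splitEquiv η p) (splitEquiv ε m) := by
      rw [hM11, hM12, hM21, hM22]
      apply Matrix.ext
      rintro (x | x) (y | y) <;> rfl
    have hrow : Matrix.fromCols (Lam' F η p)ᵀ 1
        = (lamRow F η p).submatrix id (splitEquiv η p) := by
      apply Matrix.ext
      rintro x (y | y)
      · rfl
      · show (1 : Matrix (Fin p) (Fin p) (Polynomial F)) x y = lamRow F η p x (Fin.last η, y)
        by_cases h : y = x
        · simp [Matrix.one_apply, lamRow, h]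
        · simp [Matrix.one_apply, lamRow, h, Ne.symm h]
    have hcol : Matrix.fromRows (Lam' F ε m) 1
        = (lamCol F ε m).submatrix (splitEquiv ε m) id := by
      apply Matrix.ext
      rintro (y | y) x
      · rfl
      · show (1 : Matrix (Fin m) (Fin m) (Polynomial F)) y x = lamCol F ε m (Fin.last ε, y) x
        simp [Matrix.one_apply, lamCol]
    have e1 : lamRow F η p
        = (Matrix.fromCols (Lam' F η p)ᵀ 1).submatrix id (splitEquiv η p).symm := by
      rw [hrow, Matrix.submatrix_submatrix]
      simp
    have e2 : lamCol F ε m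
        = (Matrix.fromRows (Lam' F ε m) 1).submatrix (splitEquiv ε m).symm id := by
      rw [hcol, Matrix.submatrix_submatrix]
      simp
    have e3 : M = (Matrix.fromBlocks M11 M12 M21 M22).submatrix
        (splitEquiv η p).symm (splitEquiv ε m).symm := by
      rw [hFB, Matrix.submatrix_submatrix]
      simp
    rw [hP, e1, e2, e3, Matrix.submatrix_mul_equiv, Matrix.submatrix_mul_equiv,
      Matrix.submatrix_id_id, Matrix.fromCols_mul_fromBlocks,
      Matrix.fromCols_mul_fromRows, Matrix.one_mul, Matrix.one_mul, Matrix.mul_one,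
      Matrix.add_mul]
    abel
  have hb : M22 + Ct * At⁻¹ * Bt = P := by
    rw [Matrix.mul_assoc, hinvBt, hCt, Matrix.neg_mul, Matrix.fromCols_mul_fromRows, hBhpT,
      hPdec]
    simp only [Matrix.mul_neg, Matrix.mul_add, ← Matrix.mul_assoc, neg_add_rev, neg_neg]
    abel
  refine ⟨hdetAt, hb, ?_⟩
  refine ⟨(Matrix.fromBlocks 1 (Ct * At⁻¹) 0 At⁻¹).submatrix id (eRow p ε m η).symm,
    (Matrix.fromBlocks 1 0 (-(At⁻¹ * Bt)) 1).submatrix (eCol m ε η p).symm id, ?_, ?_, ?_⟩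
  · have hmap : (Sum.elim (fun i : Fin p => Sum.inl (Fin.last η, i))
        (Sum.elim (fun em : Fin ε × Fin m => Sum.inr em)
          (fun hp : Fin η × Fin p => Sum.inl (hp.1.castSucc, hp.2)))) = ⇑(eRow p ε m η) := rfl
    rw [hmap, Matrix.submatrix_submatrix]
    simp only [Function.comp_id, Equiv.symm_comp_self, Matrix.submatrix_id_id]
    rw [Matrix.det_fromBlocks_zero₂₁, Matrix.det_one, one_mul]
    exact At.isUnit_nonsing_inv_det hdetAt
  · have hmap : (Sum.elim (fun j : Fin m => Sum.inl (Fin.last ε, j))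
        (Sum.elim (fun em : Fin ε × Fin m => Sum.inl (em.1.castSucc, em.2))
          (fun hp : Fin η × Fin p => Sum.inr hp))) = ⇑(eCol m ε η p) := rfl
    rw [hmap, Matrix.submatrix_submatrix]
    simp only [Function.comp_id, Function.id_comp, Equiv.symm_comp_self,
      Matrix.submatrix_id_id]
    rw [Matrix.det_fromBlocks_zero₁₂, Matrix.det_one, Matrix.det_one, one_mul]
    exact isUnit_one
  · have hN : CEK.submatrix (eRow p ε m η) (eCol m ε η p)
        = Matrix.fromBlocks M22 (-Ct) Bt At := by
      rw [hCEK, hAtB, hBtB, hCt, neg_neg, hM22, hM21, hM12, hM11, hAem, hBem, hAhp, hBhp]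
      apply Matrix.ext
      rintro (x | (em | hp)) (y | (em' | hp')) <;>
        simp [eRow, eCol, Matrix.mul_apply, Matrix.one_apply, mul_comm]
    have hCEK2 : CEK = (Matrix.fromBlocks M22 (-Ct) Bt At).submatrix
        (eRow p ε m η).symm (eCol m ε η p).symm := by
      rw [← hN, Matrix.submatrix_submatrix]
      simp only [Equiv.self_comp_symm, Matrix.submatrix_id_id]
    rw [hCEK2, Matrix.submatrix_mul_equiv, Matrix.submatrix_mul_equiv, Matrix.submatrix_id_id]
    have hUN : (Matrix.fromBlocks (1 : Matrix (Fin p) (Fin p) (Polynomial F)) (Ct * At⁻¹) 0 At⁻¹ :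
          Matrix (Fin p ⊕ ((Fin ε × Fin m) ⊕ (Fin η × Fin p)))
            (Fin p ⊕ ((Fin ε × Fin m) ⊕ (Fin η × Fin p))) (Polynomial F))
          * Matrix.fromBlocks M22 (-Ct) Bt At
        = Matrix.fromBlocks P 0 (At⁻¹ * Bt) 1 := by
      rw [Matrix.fromBlocks_multiply, Matrix.fromBlocks_inj]
      refine ⟨?_, ?_, ?_, ?_⟩
      · rw [Matrix.one_mul]; exact hb
      · rw [Matrix.one_mul, Matrix.nonsing_inv_mul_cancel_right _ _ hdetAt, neg_add_cancel]
      · rw [Matrix.zero_mul, zero_add]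
      · rw [Matrix.zero_mul, zero_add, Matrix.nonsing_inv_mul _ hdetAt]
    rw [hUN, Matrix.fromBlocks_multiply, Matrix.fromBlocks_inj]
    refine ⟨?_, ?_, ?_, ?_⟩
    · rw [Matrix.mul_one, Matrix.zero_mul, add_zero]
    · rw [Matrix.mul_zero, Matrix.zero_mul, add_zero]
    · rw [Matrix.mul_one, Matrix.one_mul, add_neg_cancel]
    · rw [Matrix.mul_zero, Matrix.one_mul, zero_add]
end

section
/- Let 𝔽 be a field with algebraic closure 𝔽̄. Let L(λ) = [[A(λ), B(λ)],[−C(λ), D(λ)]] ∈ 𝔽[λ]^{(n+p)×(n+m)} be a linear polynomial system matrix with unimodular state matrix A(λ), and let A_s ∈ 𝔽^{s×s}, B_s ∈ 𝔽^{s×m}, C_s ∈ 𝔽^{p×s} satisfy the minimality conditions rank [λ₀I_s − A_s B_s] = s and rank [λ₀I_s − A_s; C_s] = s for all λ₀ ∈ 𝔽̄. Then the pencil 𝓛(λ) = [[λI_s − A_s, 0, B_s],[0, A(λ), B(λ)],[−C_s, −C(λ), D(λ)]], viewed as a polynomial system matrix with state matrix diag(λI_s − A_s, A(λ)), is minimal: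 rank [λ₀I_s − A_s, 0, B_s; 0, A(λ₀), B(λ₀)] = s + n and rank [λ₀I_s − A_s, 0; 0, A(λ₀); −C_s, −C(λ₀)] = s + n for all λ₀ ∈ 𝔽̄. -/
open Polynomial Matrix

lemma aux_rank_rows {K : Type*} [Field K] {r c : Type*} [Fintype r] [Fintype c]
    {M : Matrix r c K} : M.rank = Fintype.card r ↔ Function.Injective M.vecMul := by
  rw [Matrix.vecMul_injective_iff, linearIndependent_iff_card_eq_finrank_span,
    Matrix.rank_eq_finrank_span_row, eq_comm]
  rfl

lemma aux_rank_cols {K : Type*} [Field K] {r c : Type*} [Fintype r] [Fintype c]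
    {M : Matrix r c K} : M.rank = Fintype.card c ↔ Function.Injective M.mulVec := by
  rw [← Matrix.rank_transpose, Matrix.mulVec_injective_iff]
  change _ ↔ LinearIndependent K Mᵀ.row
  rw [← Matrix.vecMul_injective_iff]
  exact aux_rank_rows

lemma aux_vecMul_inj {K : Type*} [Field K] {r c : Type*} [Fintype r] [Fintype c]
    {M : Matrix r c K} : Function.Injective M.vecMul ↔ ∀ v, M.vecMul v = 0 → v = 0 := by
  rw [← Matrix.coe_vecMulLinear]
  exact injective_iff_map_eq_zero M.vecMulLinear

lemma aux_mulVec_inj {K : Type*} [Field K] {r c : Type*} [Fintype r] [Fintype c]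
    {M : Matrix r c K} : Function.Injective M.mulVec ↔ ∀ v, M.mulVec v = 0 → v = 0 := by
  rw [← Matrix.coe_mulVecLin]
  exact injective_iff_map_eq_zero M.mulVecLin

/-- Let `L = [[A, B], [-C, D]]` be a linear polynomial system matrix with
unimodular state matrix `A(λ)` and let `A_s, B_s, C_s` be constant matrices satisfying the
minimality conditions `rank [λ₀I - A_s  B_s] = s` and `rank [λ₀I - A_s; C_s] = s` for all
`λ₀` in the algebraic closure of `F`. Then the pencil
`𝓛(λ) = [[λI - A_s, 0, B_s], [0, A, B], [-C_s, -C, D]]`, viewed as a polynomial system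
matrix with state matrix `diag (λI - A_s, A(λ))`, is minimal. -/
theorem stmt_19 {F : Type*} [Field F] {n p m s : ℕ}
    (A : Matrix (Fin n) (Fin n) (Polynomial F))
    (B : Matrix (Fin n) (Fin m) (Polynomial F))
    (C : Matrix (Fin p) (Fin n) (Polynomial F))
    (D : Matrix (Fin p) (Fin m) (Polynomial F))
    -- `L = [[A, B], [-C, D]]` is a pencil
    (hL : ∀ i j, ((Matrix.fromBlocks A B (-C) D) i j).degree ≤ 1)
    -- with unimodular state matrix
    (hA : IsUnit A.det)
    (As : Matrix (Fin s) (Fin s) F)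
    (Bs : Matrix (Fin s) (Fin m) F)
    (Cs : Matrix (Fin p) (Fin s) F)
    -- minimality of the state-space realization `(A_s, B_s, C_s)`
    (hmin : ∀ x : AlgebraicClosure F,
      (Matrix.fromCols
        (x • (1 : Matrix (Fin s) (Fin s) (AlgebraicClosure F)) - As.map (algebraMap F _))
        (Bs.map (algebraMap F (AlgebraicClosure F)))).rank = s ∧
      (Matrix.fromRows
        (x • (1 : Matrix (Fin s) (Fin s) (AlgebraicClosure F)) - As.map (algebraMap F _))
        (Cs.map (algebraMap F (AlgebraicClosure F)))).rank = s) :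
    -- `𝓛(λ)` is a minimal polynomial system matrix with state matrix `diag (λI - A_s, A)`
    ∀ x : AlgebraicClosure F,
      (Matrix.fromCols
        (Matrix.fromBlocks
          (x • (1 : Matrix (Fin s) (Fin s) (AlgebraicClosure F)) - As.map (algebraMap F _))
          0 0 (A.map (fun q => Polynomial.aeval x q)))
        (Matrix.fromRows (Bs.map (algebraMap F (AlgebraicClosure F)))
          (B.map (fun q => Polynomial.aeval x q)))).rank = s + n ∧
      (Matrix.fromRows
        (Matrix.fromBlocks
          (x • (1 : Matrix (Fin s) (Fin s) (AlgebraicClosure F)) - As.map (algebraMap F _))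
          0 0 (A.map (fun q => Polynomial.aeval x q)))
        (-(Matrix.fromCols (Cs.map (algebraMap F (AlgebraicClosure F)))
          (C.map (fun q => Polynomial.aeval x q))))).rank = s + n := by
  intro x
  set M11 : Matrix (Fin s) (Fin s) (AlgebraicClosure F) :=
    x • (1 : Matrix (Fin s) (Fin s) (AlgebraicClosure F)) - As.map (algebraMap F _) with hM11
  set A' : Matrix (Fin n) (Fin n) (AlgebraicClosure F) :=
    A.map (fun q => Polynomial.aeval x q) with hA'def
  set B' : Matrix (Fin n) (Fin m) (AlgebraicClosure F) := B.map (fun q => Polynomial.aeval x q)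
  set C' : Matrix (Fin p) (Fin n) (AlgebraicClosure F) := C.map (fun q => Polynomial.aeval x q)
  set Bs' : Matrix (Fin s) (Fin m) (AlgebraicClosure F) := Bs.map (algebraMap F _)
  set Cs' : Matrix (Fin p) (Fin s) (AlgebraicClosure F) := Cs.map (algebraMap F _)
  -- `A'` is invertible
  have hA' : IsUnit A'.det := by
    have hdet : A'.det = Polynomial.aeval x A.det :=
      (RingHom.map_det ((Polynomial.aeval x : Polynomial F →ₐ[F] _) :
        Polynomial F →+* AlgebraicClosure F) A).symm
    rw [hdet]
    exact hA.map _
  -- row independence of `[M11 Bs']`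
  have h1 : Function.Injective (Matrix.fromCols M11 Bs').vecMul :=
    aux_rank_rows.mp (by rw [(hmin x).1, Fintype.card_fin])
  -- column independence of `[M11; Cs']`
  have h2 : Function.Injective (Matrix.fromRows M11 Cs').mulVec :=
    aux_rank_cols.mp (by rw [(hmin x).2, Fintype.card_fin])
  have hAu : IsUnit A' := (Matrix.isUnit_iff_isUnit_det A').mpr hA'
  have hAv : Function.Injective A'.vecMul := Matrix.vecMul_injective_iff_isUnit.mpr hAu
  have hAm : Function.Injective A'.mulVec := Matrix.mulVec_injective_iff_isUnit.mpr hAu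
  constructor
  · rw [show s + n = Fintype.card (Fin s ⊕ Fin n) by simp, aux_rank_rows, aux_vecMul_inj]
    intro v hv
    have hv1 : (v ∘ Sum.inl) ᵥ* M11 = 0 ∧ (v ∘ Sum.inr) ᵥ* A' = 0 := by
      have h := congrArg (fun w => w ∘ Sum.inl) hv
      rw [Matrix.vecMul_fromCols] at h
      simp only [Sum.elim_comp_inl] at h
      rw [show v = Sum.elim (v ∘ Sum.inl) (v ∘ Sum.inr) from (Sum.elim_comp_inl_inr v).symm,
        Matrix.vecMul_fromBlocks] at h
      constructor
      · have h' := congrArg (fun w => w ∘ Sum.inl) h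
        simpa using h'
      · have h' := congrArg (fun w => w ∘ Sum.inr) h
        simpa using h'
    have hv2 : v ∘ Sum.inr = 0 := hAv (by simpa using hv1.2)
    have hvB : (v ∘ Sum.inl) ᵥ* Bs' = 0 := by
      have h := congrArg (fun w => w ∘ Sum.inr) hv
      rw [Matrix.vecMul_fromCols] at h
      simp only [Sum.elim_comp_inr] at h
      rw [show v = Sum.elim (v ∘ Sum.inl) (v ∘ Sum.inr) from (Sum.elim_comp_inl_inr v).symm,
        Matrix.sumElim_vecMul_fromRows, hv2] at h
      simpa using h
    have hv3 : v ∘ Sum.inl = 0 := by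
      apply h1
      show (v ∘ Sum.inl) ᵥ* Matrix.fromCols M11 Bs'
        = (0 : Fin s → AlgebraicClosure F) ᵥ* Matrix.fromCols M11 Bs'
      rw [Matrix.vecMul_fromCols, Matrix.vecMul_fromCols, hv1.1, hvB]
      simp
    ext (i | i)
    · exact congrFun hv3 i
    · exact congrFun hv2 i
  · rw [show s + n = Fintype.card (Fin s ⊕ Fin n) by simp, aux_rank_cols, aux_mulVec_inj]
    intro v hv
    rw [Matrix.fromRows_mulVec] at hv
    have htop := congrArg (fun w => w ∘ Sum.inl) hv
    have hbot := congrArg (fun w => w ∘ Sum.inr) hv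
    simp only [Sum.elim_comp_inl, Sum.elim_comp_inr] at htop hbot
    rw [Matrix.fromBlocks_mulVec] at htop
    have hM : M11 *ᵥ (v ∘ Sum.inl) = 0 ∧ A' *ᵥ (v ∘ Sum.inr) = 0 := by
      constructor
      · have h' := congrArg (fun w => w ∘ Sum.inl) htop
        simpa using h'
      · have h' := congrArg (fun w => w ∘ Sum.inr) htop
        simpa using h'
    have hv2 : v ∘ Sum.inr = 0 := hAm (by simpa using hM.2)
    have hvC : Cs' *ᵥ (v ∘ Sum.inl) = 0 := by
      rw [Matrix.neg_mulVec,
        show v = Sum.elim (v ∘ Sum.inl) (v ∘ Sum.inr) from (Sum.elim_comp_inl_inr v).symm,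
        Matrix.fromCols_mulVec_sumElim, hv2] at hbot
      simpa [neg_eq_zero] using hbot
    have hv3 : v ∘ Sum.inl = 0 := by
      apply h2
      show Matrix.fromRows M11 Cs' *ᵥ (v ∘ Sum.inl)
        = Matrix.fromRows M11 Cs' *ᵥ (0 : Fin s → AlgebraicClosure F)
      rw [Matrix.fromRows_mulVec, Matrix.fromRows_mulVec, hM.1, hvC]
      simp
    ext (i | i)
    · exact congrFun hv3 i
    · exact congrFun hv2 i
end
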